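/- Let q be a prime and χ₀ the principal Dirichlet character mod q. For every integer n, cos(2πn/q) = 1 - (q/(q-1))·χ₀(n) + (√q/(q-1))·Σ_{χ mod q, χ even, χ≠χ₀} ε̄_χ·χ(n), where ε_χ = τ(χ)/√q is the normalized Gauss sum (root number) of χ. -/

import Mathlib

/-!
For an even character `χ ≠ χ₀` (primitive, as `q` is prime) and `ψ = e(·/q)`, the twisting
property of Gauss sums gives `conj τ(χ) · χ(n) = τ(χ⁻¹, ψ(n ·))`. Summed over all even
characters, orthogonality keeps only `a = ±1` and yields `(q-1)/2 · (e(n/q) + e(-n/q)) =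
(q-1) cos(2πn/q)`; the principal character contributes the Ramanujan sum
`∑_{a ≠ 0} e(an/q) = q·[q ∣ n] - 1 = q - 1 - q·χ₀(n)`.
-/

open Complex Finset
open scoped Classical

/-- The normalized Gauss sum (root number) of an even Dirichlet character mod `q`. -/
noncomputable def rootNumberEven {q : ℕ} [NeZero q] (χ : DirichletCharacter ℂ q) : ℂ :=
  (∑ a : ZMod q, χ a * Complex.exp (2 * Real.pi * Complex.I * (a.val : ℂ) / q)) / Real.sqrt q

open ZMod DirichletCharacter

lemma DirichletCharacter.Even.inv {S : Type*} [CommRing S] {m : ℕ} {χ : DirichletCharacter S m}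
    (hχ : χ.Even) : χ⁻¹.Even := by
  rw [DirichletCharacter.Even, MulChar.inv_apply_eq_inv, hχ, Ring.inverse_one]

lemma DirichletCharacter.isPrimitive_of_ne_one {R : Type*} [CommMonoidWithZero R] {p : ℕ}
    [NeZero p] (hp : p.Prime) {χ : DirichletCharacter R p} (hχ : χ ≠ 1) : χ.IsPrimitive :=
  ((Nat.dvd_prime hp).mp χ.conductor_dvd_level).resolve_left
    (mt eq_one_iff_conductor_eq_one.mpr hχ)

section

variable {N : ℕ} [NeZero N]

lemma rootNumberEven_eq_gaussSum_div (χ : DirichletCharacter ℂ N) :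
    rootNumberEven χ = gaussSum χ stdAddChar / Real.sqrt N := by
  simp only [rootNumberEven, gaussSum, stdAddChar_apply, toCircle_apply]

lemma star_gaussSum_of_even {χ : DirichletCharacter ℂ N} (hχ : χ.Even)
    (ψ : AddChar (ZMod N) ℂ) : star (gaussSum χ ψ) = gaussSum χ⁻¹ ψ := by
  rw [star_gaussSum_eq, AddChar.inv_mulShift, ← Units.coe_neg_one, gaussSum_mulShift_eq,
    inv_inv, Units.coe_neg_one, hχ, one_mul]

lemma sum_even_characters_apply (a : ZMod N) :
    ∑ χ ∈ univ.filter (fun χ : DirichletCharacter ℂ N => χ.Even), χ a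
      = N.totient / 2 * ((if a = 1 then 1 else 0) + if a = -1 then 1 else 0) := by
  have half_sum (χ : DirichletCharacter ℂ N) :
      (if χ.Even then χ a else 0) = (χ a + χ (-a)) / 2 := by
    rcases χ.even_or_odd with h | h
    · rw [if_pos h, h.eval_neg]; ring
    · rw [if_neg h.not_even, h.eval_neg]; ring
  simp only [sum_filter, half_sum, ← sum_div, sum_add_distrib, sum_characters_eq,
    neg_eq_iff_eq_neg]
  split_ifs <;> ring

lemma sum_even_gaussSum (ψ : AddChar (ZMod N) ℂ) :
    ∑ χ ∈ univ.filter (fun χ : DirichletCharacter ℂ N => χ.Even), gaussSum χ ψ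
      = N.totient / 2 * (ψ 1 + ψ (-1)) := by
  simp only [gaussSum, sum_comm (s := univ.filter _), ← sum_mul, sum_even_characters_apply]
  simp [add_mul, mul_add, sum_add_distrib]

lemma ofReal_cos_eq_stdAddChar (n : ℤ) :
    (Real.cos (2 * Real.pi * n / N) : ℂ)
      = (stdAddChar (n : ZMod N) + stdAddChar (-(n : ZMod N))) / 2 := by
  rw [← Int.cast_neg, stdAddChar_coe, stdAddChar_coe, ofReal_cos, Complex.cos]
  push_cast
  ring_nf

end

section

variable {p : ℕ} [Fact p.Prime]

lemma gaussSum_one_mulShift_stdAddChar (m : ZMod p) :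
    gaussSum (1 : DirichletCharacter ℂ p) (stdAddChar.mulShift m)
      = p - 1 - p * (1 : DirichletCharacter ℂ p) m := by
  rcases eq_or_ne m 0 with rfl | hm
  · have hp : p.Prime := Fact.out
    simp [Nat.card_eq_fintype_card, Nat.totient_prime hp, Nat.cast_sub hp.one_le,
      MulChar.map_zero]
  · rw [gaussSum_one_left (isPrimitive_stdAddChar p hm), MulChar.one_apply hm.isUnit]
    ring

lemma sum_even_ne_one_star_gaussSum_mul (m : ZMod p) :
    ∑ χ ∈ univ.filter (fun χ : DirichletCharacter ℂ p => χ.Even ∧ χ ≠ 1),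
        star (gaussSum χ stdAddChar) * χ m
      = (p - 1) / 2 * (stdAddChar m + stdAddChar (-m))
          - (p - 1 - p * (1 : DirichletCharacter ℂ p) m) := by
  have hp : p.Prime := Fact.out
  have twist : ∀ χ ∈ univ.filter (fun χ : DirichletCharacter ℂ p => χ.Even ∧ χ ≠ 1),
      star (gaussSum χ stdAddChar) * χ m = gaussSum χ⁻¹ (stdAddChar.mulShift m) := by
    intro χ hχ
    obtain ⟨hχ, hχ1⟩ := (mem_filter_univ χ).mp hχ
    rw [star_gaussSum_of_even hχ, gaussSum_mulShift_of_isPrimitive _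
      (isPrimitive_of_ne_one hp (inv_ne_one.mpr hχ1)), inv_inv, mul_comm]
  have reindex : ∑ χ ∈ univ.filter (fun χ : DirichletCharacter ℂ p => χ.Even ∧ χ ≠ 1),
        gaussSum χ⁻¹ (stdAddChar.mulShift m)
      = ∑ χ ∈ univ.filter (fun χ : DirichletCharacter ℂ p => χ.Even ∧ χ ≠ 1),
        gaussSum χ (stdAddChar.mulShift m) :=
    sum_equiv (Equiv.inv _) (fun χ => by
      simpa using fun _ => ⟨Even.inv, fun h => inv_inv χ ▸ h.inv⟩) (fun _ _ => rfl)
  have erase_one : univ.filter (fun χ : DirichletCharacter ℂ p => χ.Even ∧ χ ≠ 1)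
      = (univ.filter (fun χ : DirichletCharacter ℂ p => χ.Even)).erase 1 := by
    ext χ
    simp [and_comm]
  have even_one : (1 : DirichletCharacter ℂ p) ∈ univ.filter (fun χ => χ.Even) :=
    (mem_filter_univ _).mpr (MulChar.one_apply isUnit_one.neg)
  rw [sum_congr rfl twist, reindex, erase_one, sum_erase_eq_sub even_one, sum_even_gaussSum,
    gaussSum_one_mulShift_stdAddChar, Nat.totient_prime hp, Nat.cast_sub hp.one_le]
  simp

end

/-- for prime `q` and any integer `n`,
`cos(2πn/q) = 1 - (q/(q-1))·χ₀(n) + (√q/(q-1))·∑_{χ even, χ ≠ χ₀} ε̄_χ χ(n)`. -/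
theorem cos_eq_char_expansion (q : ℕ) [NeZero q] (hq : q.Prime) (n : ℤ) :
    (Real.cos (2 * Real.pi * (n : ℝ) / q) : ℂ) =
      1 - (q : ℂ) / ((q : ℂ) - 1) * (1 : DirichletCharacter ℂ q) (n : ZMod q)
        + (Real.sqrt q : ℂ) / ((q : ℂ) - 1) *
          ∑ χ ∈ Finset.univ.filter
              (fun χ : DirichletCharacter ℂ q => χ.Even ∧ χ ≠ 1),
            (starRingEnd ℂ) (rootNumberEven χ) * χ (n : ZMod q) := by
  have : Fact q.Prime := ⟨hq⟩
  have hq1 : (q : ℂ) - 1 ≠ 0 := sub_ne_zero.mpr (by exact_mod_cast hq.one_lt.ne')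
  have hsqrt : (Real.sqrt q : ℂ) ≠ 0 := by
    exact_mod_cast (Real.sqrt_pos.mpr (by exact_mod_cast hq.pos)).ne'
  have conj_rootNumber (χ : DirichletCharacter ℂ q) :
      starRingEnd ℂ (rootNumberEven χ) * χ n
        = star (gaussSum χ ZMod.stdAddChar) * χ n / Real.sqrt q := by
    rw [rootNumberEven_eq_gaussSum_div, map_div₀, conj_ofReal, div_mul_eq_mul_div]
    rfl
  simp_rw [conj_rootNumber, ← sum_div, sum_even_ne_one_star_gaussSum_mul,
    ofReal_cos_eq_stdAddChar]
  field_simp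
  ring
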